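/- Let n ≥ 2 and α ∈ (0,1). Let S ⊆ ℝ^n be a bounded open set with boundary of class C^{1,α} and 0 ∈ ∂S; concretely, assume that up to a rotation there exist ρ > 0 and φ ∈ C^{1,α}(ℝ^{n-1}) such that S ∩ B_ρ = {x_n > φ(x')} ∩ B_ρ. Then there exists a function w ∈ C^{1,α}(ℝ^n) such that w ≥ 0 in S, w ≤ 0 in ℝ^n \ S, and liminf_{x → 0} |∇w(x)| ≥ 1. -/

import Mathlib

open MeasureTheory Filter Set Topology

noncomputable section

/-- A real-valued function on `ℝ^m` is of class `C^{1,α}`: continuously differentiable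
with `α`-Hölder continuous gradient. -/
def IsC1Holder {m : ℕ} (α : ℝ) (f : EuclideanSpace ℝ (Fin m) → ℝ) : Prop :=
  ContDiff ℝ 1 f ∧ ∃ C : ℝ, ∀ x y, ‖fderiv ℝ f x - fderiv ℝ f y‖ ≤ C * ‖x - y‖ ^ α

/-- A set has boundary of class `C^{1,α}`: near each boundary point, up to a rotation,
it is the epigraph of a `C^{1,α}` function. -/
def HasC1HolderBoundary {m : ℕ} (α : ℝ) (S : Set (EuclideanSpace ℝ (Fin m))) : Prop :=
  ∀ p ∈ frontier S, ∃ r : ℝ, 0 < r ∧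
    ∃ (e : EuclideanSpace ℝ (Fin m) ≃ₗᵢ[ℝ] WithLp 2 (EuclideanSpace ℝ (Fin (m - 1)) × ℝ))
      (g : EuclideanSpace ℝ (Fin (m - 1)) → ℝ),
      IsC1Holder α g ∧
        ∀ x ∈ Metric.ball p r,
          (x ∈ S ↔ g (WithLp.equiv 2 _ (e x)).1 < (WithLp.equiv 2 _ (e x)).2)

set_option maxHeartbeats 1000000 in
/-- **Existence of a `C^{1,α}` barrier profile** (Lemma 3.1 in the paper).
If `S ⊆ ℝ^n` is a bounded open set of class `C^{1,α}` with `0 ∈ ∂S`, whose boundary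
near the origin is (after a rotation) the graph `{x_n = φ(x')}` of a `C^{1,α}`
function `φ`, then there exists `w ∈ C^{1,α}(ℝ^n)` with `w ≥ 0` in `S`, `w ≤ 0` in
`ℝ^n \ S` and `liminf_{x → 0} |∇w(x)| ≥ 1`. -/
theorem exists_C1Holder_profile
    (n : ℕ) (hn : 2 ≤ n) (α : ℝ) (hα : α ∈ Set.Ioo (0 : ℝ) 1)
    (S : Set (EuclideanSpace ℝ (Fin n))) (hSo : IsOpen S) (hSb : Bornology.IsBounded S)
    (hSreg : HasC1HolderBoundary α S)
    (h0S : (0 : EuclideanSpace ℝ (Fin n)) ∈ frontier S)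
    (ρ : ℝ) (hρ : 0 < ρ) (φ : EuclideanSpace ℝ (Fin (n - 1)) → ℝ)
    (hφ : IsC1Holder α φ)
    (hSgraph : S ∩ Metric.ball 0 ρ =
      {x : EuclideanSpace ℝ (Fin n) |
        φ (WithLp.toLp 2 (fun j => x (Fin.castLE (by omega) j))) < x ⟨n - 1, by omega⟩} ∩ Metric.ball 0 ρ) :
    ∃ w : EuclideanSpace ℝ (Fin n) → ℝ,
      IsC1Holder α w ∧ (∀ x ∈ S, 0 ≤ w x) ∧ (∀ x ∉ S, w x ≤ 0) ∧
        1 ≤ Filter.liminf (fun x => ‖fderiv ℝ w x‖)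
          (𝓝[≠] (0 : EuclideanSpace ℝ (Fin n))) := by
  obtain ⟨hα0, hα1⟩ := hα
  have hlt : n - 1 ≤ n := by omega
  set i_n : Fin n := ⟨n - 1, by omega⟩ with hi_n
  -- the projection onto the first n-1 coordinates
  set πl : EuclideanSpace ℝ (Fin n) →ₗ[ℝ] EuclideanSpace ℝ (Fin (n - 1)) :=
    { toFun := fun x => (WithLp.toLp 2 (fun j => x (Fin.castLE hlt j)) : EuclideanSpace ℝ (Fin (n - 1)))
      map_add' := fun x y => rfl
      map_smul' := fun c x => rfl } with hπl
  set π := LinearMap.toContinuousLinearMap πl with hπdef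
  have hπapp : ∀ (x : EuclideanSpace ℝ (Fin n)) (j : Fin (n - 1)),
      π x j = x (Fin.castLE hlt j) := fun x j => rfl
  have hπnorm : ∀ z, ‖π z‖ ≤ ‖z‖ := by
    intro z
    rw [EuclideanSpace.norm_eq, EuclideanSpace.norm_eq]
    apply Real.sqrt_le_sqrt
    calc ∑ j : Fin (n - 1), ‖π z j‖ ^ 2
        = ∑ j ∈ Finset.univ.map ⟨Fin.castLE hlt, Fin.castLE_injective hlt⟩, ‖z j‖ ^ 2 := by
          rw [Finset.sum_map]; rfl
      _ ≤ ∑ i : Fin n, ‖z i‖ ^ 2 :=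
          Finset.sum_le_sum_of_subset_of_nonneg (Finset.subset_univ _)
            (by intros; positivity)
  -- the linear profile f
  set f : EuclideanSpace ℝ (Fin n) → ℝ := fun x => x i_n - φ (π x) with hfdef
  have hφ1 : ContDiff ℝ 1 φ := hφ.1
  obtain ⟨Cφ, hCφraw⟩ := hφ.2
  set C0 : ℝ := max Cφ 0 with hC0
  have hC0nn : (0:ℝ) ≤ C0 := le_max_right _ _
  have hCφ : ∀ a b, ‖fderiv ℝ φ a - fderiv ℝ φ b‖ ≤ C0 * ‖a - b‖ ^ α := by
    intro a b
    exact (hCφraw a b).trans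
      (mul_le_mul_of_nonneg_right (le_max_left _ _) (Real.rpow_nonneg (norm_nonneg _) _))
  have hproj : ∀ x : EuclideanSpace ℝ (Fin n),
      HasFDerivAt (𝕜 := ℝ) (fun z : EuclideanSpace ℝ (Fin n) => z i_n)
        (EuclideanSpace.proj i_n) x := by
    intro x
    have := (EuclideanSpace.proj (𝕜 := ℝ) i_n).hasFDerivAt (x := x)
    have he : ⇑(EuclideanSpace.proj (𝕜 := ℝ) (ι := Fin n) i_n)
        = fun z : EuclideanSpace ℝ (Fin n) => z i_n := by funext z; simp
    rwa [he] at this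
  have hfd : ∀ x, HasFDerivAt f
      (EuclideanSpace.proj i_n - (fderiv ℝ φ (π x)).comp π) x := by
    intro x
    have h2 : HasFDerivAt φ (fderiv ℝ φ (π x)) (π x) :=
      (hφ1.differentiable one_ne_zero (π x)).hasFDerivAt
    exact (hproj x).sub (h2.comp x π.hasFDerivAt)
  have hprojcd : ContDiff ℝ 1 (fun z : EuclideanSpace ℝ (Fin n) => z i_n) := by
    have he : (fun z : EuclideanSpace ℝ (Fin n) => z i_n)
        = ⇑(EuclideanSpace.proj (𝕜 := ℝ) (ι := Fin n) i_n) := by funext z; simp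
    rw [he]; exact ContinuousLinearMap.contDiff (𝕜 := ℝ) (EuclideanSpace.proj (𝕜 := ℝ) (ι := Fin n) i_n)
  have hfC : ContDiff ℝ 1 f := by
    rw [hfdef]
    exact hprojcd.sub (hφ1.comp π.contDiff)
  have hπle1 : ‖π‖ ≤ 1 := ContinuousLinearMap.opNorm_le_bound π zero_le_one
    (fun z => by simpa using hπnorm z)
  have hDfH : ∀ x y, ‖fderiv ℝ f x - fderiv ℝ f y‖ ≤ C0 * ‖x - y‖ ^ α := by
    intro x y
    rw [(hfd x).fderiv, (hfd y).fderiv]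
    have heq : (EuclideanSpace.proj i_n - (fderiv ℝ φ (π x)).comp π)
        - (EuclideanSpace.proj i_n - (fderiv ℝ φ (π y)).comp π)
        = ((fderiv ℝ φ (π y) - fderiv ℝ φ (π x)).comp π) := by
      ext z; simp
    rw [heq]
    calc ‖(fderiv ℝ φ (π y) - fderiv ℝ φ (π x)).comp π‖
        ≤ ‖fderiv ℝ φ (π y) - fderiv ℝ φ (π x)‖ * ‖π‖ :=
          ContinuousLinearMap.opNorm_comp_le _ _
      _ ≤ ‖fderiv ℝ φ (π y) - fderiv ℝ φ (π x)‖ * 1 :=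
          mul_le_mul_of_nonneg_left hπle1 (norm_nonneg _)
      _ = ‖fderiv ℝ φ (π y) - fderiv ℝ φ (π x)‖ := mul_one _
      _ ≤ C0 * ‖π y - π x‖ ^ α := hCφ _ _
      _ ≤ C0 * ‖x - y‖ ^ α := by
          apply mul_le_mul_of_nonneg_left _ hC0nn
          apply Real.rpow_le_rpow (norm_nonneg _) _ hα0.le
          rw [← map_sub]
          calc ‖π (y - x)‖ ≤ ‖y - x‖ := hπnorm _
            _ = ‖x - y‖ := norm_sub_rev _ _
  -- the bump
  set B : ContDiffBump (0 : EuclideanSpace ℝ (Fin n)) :=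
    ⟨ρ/2, ρ, by positivity, by linarith⟩ with hB
  have hBC : ContDiff ℝ 1 ⇑B := B.contDiff
  set w : EuclideanSpace ℝ (Fin n) → ℝ := fun x => B x * f x with hwdef
  have hwC : ContDiff ℝ 1 w := hBC.mul hfC
  have hDw : ∀ x, fderiv ℝ w x = B x • fderiv ℝ f x + f x • fderiv ℝ ⇑B x := by
    intro x
    exact fderiv_mul (hBC.differentiable one_ne_zero x) (hfC.differentiable one_ne_zero x)
  -- vanishing outside the ball
  have hBzero : ∀ z : EuclideanSpace ℝ (Fin n), ρ ≤ ‖z‖ → B z = 0 := by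
    intro z hz
    apply Function.notMem_support.mp
    rw [B.support_eq]
    simp only [Metric.mem_ball, dist_zero_right, not_lt]
    exact hz
  have hDw0 : ∀ x : EuclideanSpace ℝ (Fin n), ρ < ‖x‖ → fderiv ℝ w x = 0 := by
    intro x hx
    have hev : w =ᶠ[𝓝 x] fun _ => (0:ℝ) := by
      filter_upwards [Metric.ball_mem_nhds x (by linarith : (0:ℝ) < ‖x‖ - ρ)] with z hz
      have hz' : ‖z - x‖ < ‖x‖ - ρ := by
        simpa [Metric.mem_ball, dist_eq_norm] using hz
      have : ρ ≤ ‖z‖ := by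
        have h1 := norm_sub_norm_le x z
        have h2 : ‖x - z‖ = ‖z - x‖ := norm_sub_rev _ _
        linarith
      simp [hwdef, hBzero z this]
    rw [hev.fderiv_eq]
    exact fderiv_const_apply 0
  -- compact set and bounds
  set K := Metric.closedBall (0 : EuclideanSpace ℝ (Fin n)) (ρ + 2) with hK
  have hKc : IsCompact K := isCompact_closedBall _ _
  have h0K : (0 : EuclideanSpace ℝ (Fin n)) ∈ K := by
    simp [hK, Metric.mem_closedBall]; positivity
  obtain ⟨Mf, hMf⟩ := hKc.exists_bound_of_continuousOn hfC.continuous.continuousOn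
  obtain ⟨MDf, hMDf⟩ := hKc.exists_bound_of_continuousOn
    (hfC.continuous_fderiv one_ne_zero).continuousOn
  have hDBC : ContDiff ℝ 1 (fderiv ℝ ⇑B) :=
    (B.contDiff (n := ⊤)).fderiv_right (by norm_cast)
  obtain ⟨MDB, hMDB⟩ := hKc.exists_bound_of_continuousOn hDBC.continuous.continuousOn
  obtain ⟨M2, hM2⟩ := hKc.exists_bound_of_continuousOn
    (hDBC.continuous_fderiv one_ne_zero).continuousOn
  obtain ⟨M, hM⟩ := hKc.exists_bound_of_continuousOn
    (hwC.continuous_fderiv one_ne_zero).continuousOn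
  have hMfnn : 0 ≤ Mf := (norm_nonneg _).trans (hMf 0 h0K)
  have hMDfnn : 0 ≤ MDf := (norm_nonneg _).trans (hMDf 0 h0K)
  have hMDBnn : 0 ≤ MDB := (norm_nonneg _).trans (hMDB 0 h0K)
  have hM2nn : 0 ≤ M2 := (norm_nonneg _).trans (hM2 0 h0K)
  have hMnn : 0 ≤ M := (norm_nonneg _).trans (hM 0 h0K)
  -- global bound on ‖Dw‖
  have hMg : ∀ x, ‖fderiv ℝ w x‖ ≤ M := by
    intro x
    by_cases hx : ‖x‖ ≤ ρ + 2
    · exact hM x (by simpa [hK, Metric.mem_closedBall, dist_zero_right] using hx)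
    · rw [hDw0 x (by linarith)]; simpa using hMnn
  have hconv : Convex ℝ K := convex_closedBall _ _
  -- Lipschitz estimates on K
  have hBlip : ∀ x ∈ K, ∀ y ∈ K, ‖B y - B x‖ ≤ MDB * ‖y - x‖ := by
    intro x hx y hy
    exact hconv.norm_image_sub_le_of_norm_fderiv_le
      (fun z _ => hBC.differentiable one_ne_zero z) (fun z hz => hMDB z hz) hx hy
  have hflip : ∀ x ∈ K, ∀ y ∈ K, ‖f y - f x‖ ≤ MDf * ‖y - x‖ := by
    intro x hx y hy
    exact hconv.norm_image_sub_le_of_norm_fderiv_le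
      (fun z _ => hfC.differentiable one_ne_zero z) (fun z hz => hMDf z hz) hx hy
  have hDBlip : ∀ x ∈ K, ∀ y ∈ K,
      ‖fderiv ℝ ⇑B y - fderiv ℝ ⇑B x‖ ≤ M2 * ‖y - x‖ := by
    intro x hx y hy
    exact hconv.norm_image_sub_le_of_norm_fderiv_le
      (fun z _ => hDBC.differentiable one_ne_zero z) (fun z hz => hM2 z hz) hx hy
  set CK : ℝ := C0 + (MDB * MDf + Mf * M2 + MDf * MDB) with hCK
  have hCKnn : 0 ≤ CK := by positivity
  -- local Hölder estimate on K
  have key : ∀ x ∈ K, ∀ y ∈ K, ‖x - y‖ ≤ 1 →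
      ‖fderiv ℝ w x - fderiv ℝ w y‖ ≤ CK * ‖x - y‖ ^ α := by
    intro x hx y hy hle1
    rcases eq_or_ne x y with rfl | hne
    · simp only [sub_self, norm_zero]
      positivity
    · have h01 : 0 < ‖x - y‖ := by
        rw [norm_pos_iff, sub_ne_zero]; exact hne
      have hxy_pow : ‖x - y‖ ≤ ‖x - y‖ ^ α := by
        calc ‖x - y‖ = ‖x - y‖ ^ (1:ℝ) := (Real.rpow_one _).symm
          _ ≤ ‖x - y‖ ^ α := Real.rpow_le_rpow_of_exponent_ge h01 hle1 hα1.le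
      have hpownn : 0 ≤ ‖x - y‖ ^ α := Real.rpow_nonneg (norm_nonneg _) _
      rw [hDw x, hDw y]
      have decomp : (B x • fderiv ℝ f x + f x • fderiv ℝ ⇑B x)
          - (B y • fderiv ℝ f y + f y • fderiv ℝ ⇑B y)
          = B x • (fderiv ℝ f x - fderiv ℝ f y) + (B x - B y) • fderiv ℝ f y
            + (f x • (fderiv ℝ ⇑B x - fderiv ℝ ⇑B y) + (f x - f y) • fderiv ℝ ⇑B y) := by
        module
      rw [decomp]
      have t1 : ‖B x • (fderiv ℝ f x - fderiv ℝ f y)‖ ≤ C0 * ‖x - y‖ ^ α := by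
        rw [norm_smul]
        calc ‖B x‖ * ‖fderiv ℝ f x - fderiv ℝ f y‖
            ≤ 1 * (C0 * ‖x - y‖ ^ α) := by
              apply mul_le_mul _ (hDfH x y) (norm_nonneg _) zero_le_one
              rw [Real.norm_eq_abs, abs_of_nonneg B.nonneg]; exact B.le_one
          _ = C0 * ‖x - y‖ ^ α := one_mul _
      have t2 : ‖(B x - B y) • fderiv ℝ f y‖ ≤ MDB * MDf * ‖x - y‖ ^ α := by
        rw [norm_smul]
        have h1 : ‖B x - B y‖ ≤ MDB * ‖x - y‖ := hBlip y hy x hx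
        have h2 : ‖fderiv ℝ f y‖ ≤ MDf := hMDf y hy
        calc ‖B x - B y‖ * ‖fderiv ℝ f y‖ ≤ (MDB * ‖x - y‖) * MDf := by
              apply mul_le_mul h1 h2 (norm_nonneg _) (by positivity)
          _ = MDB * MDf * ‖x - y‖ := by ring
          _ ≤ MDB * MDf * ‖x - y‖ ^ α :=
              mul_le_mul_of_nonneg_left hxy_pow (by positivity)
      have t3 : ‖f x • (fderiv ℝ ⇑B x - fderiv ℝ ⇑B y)‖ ≤ Mf * M2 * ‖x - y‖ ^ α := by
        rw [norm_smul]
        have h1 : ‖f x‖ ≤ Mf := hMf x hx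
        have h2 : ‖fderiv ℝ ⇑B x - fderiv ℝ ⇑B y‖ ≤ M2 * ‖x - y‖ := hDBlip y hy x hx
        calc ‖f x‖ * ‖fderiv ℝ ⇑B x - fderiv ℝ ⇑B y‖ ≤ Mf * (M2 * ‖x - y‖) := by
              apply mul_le_mul h1 h2 (norm_nonneg _) hMfnn
          _ = Mf * M2 * ‖x - y‖ := by ring
          _ ≤ Mf * M2 * ‖x - y‖ ^ α :=
              mul_le_mul_of_nonneg_left hxy_pow (by positivity)
      have t4 : ‖(f x - f y) • fderiv ℝ ⇑B y‖ ≤ MDf * MDB * ‖x - y‖ ^ α := by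
        rw [norm_smul]
        have h1 : ‖f x - f y‖ ≤ MDf * ‖x - y‖ := hflip y hy x hx
        have h2 : ‖fderiv ℝ ⇑B y‖ ≤ MDB := hMDB y hy
        calc ‖f x - f y‖ * ‖fderiv ℝ ⇑B y‖ ≤ (MDf * ‖x - y‖) * MDB := by
              apply mul_le_mul h1 h2 (norm_nonneg _) (by positivity)
          _ = MDf * MDB * ‖x - y‖ := by ring
          _ ≤ MDf * MDB * ‖x - y‖ ^ α :=
              mul_le_mul_of_nonneg_left hxy_pow (by positivity)
      calc ‖B x • (fderiv ℝ f x - fderiv ℝ f y) + (B x - B y) • fderiv ℝ f y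
            + (f x • (fderiv ℝ ⇑B x - fderiv ℝ ⇑B y) + (f x - f y) • fderiv ℝ ⇑B y)‖
          ≤ ‖B x • (fderiv ℝ f x - fderiv ℝ f y) + (B x - B y) • fderiv ℝ f y‖
            + ‖f x • (fderiv ℝ ⇑B x - fderiv ℝ ⇑B y) + (f x - f y) • fderiv ℝ ⇑B y‖ :=
            norm_add_le _ _
        _ ≤ (‖B x • (fderiv ℝ f x - fderiv ℝ f y)‖ + ‖(B x - B y) • fderiv ℝ f y‖)
            + (‖f x • (fderiv ℝ ⇑B x - fderiv ℝ ⇑B y)‖ + ‖(f x - f y) • fderiv ℝ ⇑B y‖) :=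
            add_le_add (norm_add_le _ _) (norm_add_le _ _)
        _ ≤ (C0 * ‖x - y‖ ^ α + MDB * MDf * ‖x - y‖ ^ α)
            + (Mf * M2 * ‖x - y‖ ^ α + MDf * MDB * ‖x - y‖ ^ α) :=
            add_le_add (add_le_add t1 t2) (add_le_add t3 t4)
        _ = CK * ‖x - y‖ ^ α := by rw [hCK]; ring
  -- global Hölder estimate
  set Cw : ℝ := 2 * M + CK with hCw
  have hwHolder : ∀ x y, ‖fderiv ℝ w x - fderiv ℝ w y‖ ≤ Cw * ‖x - y‖ ^ α := by
    have main : ∀ x y : EuclideanSpace ℝ (Fin n), ‖x‖ ≤ ρ + 1 → ‖x - y‖ ≤ 1 →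
        ‖fderiv ℝ w x - fderiv ℝ w y‖ ≤ Cw * ‖x - y‖ ^ α := by
      intro x y hx hle1
      have hxK : x ∈ K := by
        simp only [hK, Metric.mem_closedBall, dist_zero_right]; linarith
      have hyK : y ∈ K := by
        simp only [hK, Metric.mem_closedBall, dist_zero_right]
        have := norm_sub_norm_le y x
        have h2 : ‖y - x‖ = ‖x - y‖ := norm_sub_rev _ _
        linarith
      have := key x hxK y hyK hle1
      have hpownn : 0 ≤ ‖x - y‖ ^ α := Real.rpow_nonneg (norm_nonneg _) _
      nlinarith
    intro x y
    by_cases hle1 : ‖x - y‖ ≤ 1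
    · by_cases hx : ‖x‖ ≤ ρ + 1
      · exact main x y hx hle1
      · by_cases hy : ‖y‖ ≤ ρ + 1
        · rw [norm_sub_rev, norm_sub_rev x y]
          exact main y x hy (by rwa [norm_sub_rev])
        · rw [hDw0 x (by linarith), hDw0 y (by linarith)]
          simp only [sub_self, norm_zero]
          have : 0 ≤ ‖x - y‖ ^ α := Real.rpow_nonneg (norm_nonneg _) _
          positivity
    · push_neg at hle1
      have h1p : 1 ≤ ‖x - y‖ ^ α := Real.one_le_rpow hle1.le hα0.le
      calc ‖fderiv ℝ w x - fderiv ℝ w y‖ ≤ ‖fderiv ℝ w x‖ + ‖fderiv ℝ w y‖ :=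
            norm_sub_le _ _
        _ ≤ 2 * M := by have := hMg x; have := hMg y; linarith
        _ ≤ 2 * M * ‖x - y‖ ^ α := le_mul_of_one_le_right (by positivity) h1p
        _ ≤ Cw * ‖x - y‖ ^ α := by
            apply mul_le_mul_of_nonneg_right _ (by positivity)
            rw [hCw]; linarith
  refine ⟨w, ⟨hwC, Cw, hwHolder⟩, ?_, ?_, ?_⟩
  · -- nonneg on S
    intro x hxS
    by_cases hxb : x ∈ Metric.ball (0 : EuclideanSpace ℝ (Fin n)) ρ
    · have hmem : x ∈ S ∩ Metric.ball (0 : EuclideanSpace ℝ (Fin n)) ρ := ⟨hxS, hxb⟩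
      rw [hSgraph] at hmem
      have hfx : 0 < f x := by
        have := hmem.1
        simp only [Set.mem_setOf_eq] at this
        have : φ (π x) < x i_n := this
        simpa [hfdef] using this
      exact mul_nonneg B.nonneg hfx.le
    · have : ρ ≤ ‖x‖ := by
        simpa [Metric.mem_ball, dist_zero_right, not_lt] using hxb
      simp [hwdef, hBzero x this]
  · -- nonpos outside S
    intro x hxS
    by_cases hxb : x ∈ Metric.ball (0 : EuclideanSpace ℝ (Fin n)) ρ
    · have hfx : f x ≤ 0 := by
        by_contra hpos
        push_neg at hpos
        have hmem : x ∈ {x : EuclideanSpace ℝ (Fin n) |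
            φ (WithLp.toLp 2 (fun j => x (Fin.castLE (by omega) j))) < x ⟨n - 1, by omega⟩}
              ∩ Metric.ball 0 ρ := by
          refine ⟨?_, hxb⟩
          simp only [Set.mem_setOf_eq]
          have : φ (π x) < x i_n := by simpa [hfdef] using hpos
          exact this
        rw [← hSgraph] at hmem
        exact hxS hmem.1
      exact mul_nonpos_of_nonneg_of_nonpos B.nonneg hfx
    · have : ρ ≤ ‖x‖ := by
        simpa [Metric.mem_ball, dist_zero_right, not_lt] using hxb
      simp [hwdef, hBzero x this]
  · -- liminf
    have hev : w =ᶠ[𝓝 (0 : EuclideanSpace ℝ (Fin n))] f := by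
      filter_upwards [Metric.closedBall_mem_nhds (0 : EuclideanSpace ℝ (Fin n))
        (by positivity : (0:ℝ) < ρ/2)] with z hz
      have : B z = 1 := B.one_of_mem_closedBall hz
      simp [hwdef, this]
    have h0 : fderiv ℝ w 0 = fderiv ℝ f 0 := hev.fderiv_eq
    set e : EuclideanSpace ℝ (Fin n) := EuclideanSpace.single i_n (1:ℝ) with he
    have hπe : π e = 0 := by
      ext j
      rw [hπapp]
      simp only [he, EuclideanSpace.single_apply]
      rw [if_neg]
      · rfl
      · intro hcontra
        have : (Fin.castLE hlt j : Fin n).1 = i_n.1 := by rw [hcontra]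
        simp only [Fin.coe_castLE, hi_n] at this
        omega
    have happ : (fderiv ℝ w 0) e = 1 := by
      rw [h0, (hfd 0).fderiv]
      simp only [ContinuousLinearMap.sub_apply, ContinuousLinearMap.comp_apply]
      rw [hπe, map_zero]
      have : (EuclideanSpace.proj (𝕜 := ℝ) i_n) e = 1 := by
        simp [he, EuclideanSpace.single_apply]
      rw [this]; ring
    have h1le : 1 ≤ ‖fderiv ℝ w 0‖ := by
      have hle := (fderiv ℝ w 0).le_opNorm e
      rw [happ] at hle
      have hne : ‖e‖ = 1 := by rw [he, EuclideanSpace.norm_single]; simp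
      rw [hne, mul_one] at hle
      simpa using hle
    haveI : NeZero n := ⟨by omega⟩
    haveI : Nontrivial (EuclideanSpace ℝ (Fin n)) := by infer_instance
    have htend : Tendsto (fun x => ‖fderiv ℝ w x‖)
        (𝓝[≠] (0 : EuclideanSpace ℝ (Fin n))) (𝓝 ‖fderiv ℝ w 0‖) :=
      (((hwC.continuous_fderiv one_ne_zero).norm.tendsto 0)).mono_left nhdsWithin_le_nhds
    rw [htend.liminf_eq]
    exact h1le


end
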